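/- Let k ≥ 1, let G be a k-edge-connected finite simple graph on V, fix a root r ∈ V, and let 𝓛 be a maximal edge-covering laminar family of k-cuts avoiding r. If u is a snug vertex with snug shores (S₁, S₂), then S₁ ∈ 𝓛 and S₂ ∈ 𝓛. -/

import Mathlib

open Finset

variable {V : Type*} [Fintype V] [DecidableEq V]

/-- `Crosses S e`: exactly one endpoint of the edge/link `e` lies in `S`. -/
def Crosses (S : Finset V) (e : Sym2 V) : Prop :=
  ∃ x y : V, e = s(x, y) ∧ x ∈ S ∧ y ∉ S

instance (S : Finset V) : DecidablePred (Crosses S) := fun e =>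
  decidable_of_iff (∃ x y : V, e = s(x, y) ∧ x ∈ S ∧ y ∉ S) Iff.rfl

/-- The cut `δ(S)`: edges of `G` with exactly one endpoint in `S`. -/
def cutEdges (G : SimpleGraph V) [DecidableRel G.Adj] (S : Finset V) :
    Finset (Sym2 V) :=
  G.edgeFinset.filter fun e => Crosses S e

/-- `G` is `k`-edge-connected: every nonempty proper cut has at least `k` crossing edges. -/
def EdgeConnected (G : SimpleGraph V) [DecidableRel G.Adj] (k : ℕ) : Prop :=
  ∀ S : Finset V, S.Nonempty → S ≠ Finset.univ → k ≤ (cutEdges G S).card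

/-- `S` is a `k`-cut: a nonempty proper vertex set with exactly `k` crossing edges. -/
def IsCut (G : SimpleGraph V) [DecidableRel G.Adj] (k : ℕ) (S : Finset V) : Prop :=
  S.Nonempty ∧ S ≠ Finset.univ ∧ (cutEdges G S).card = k

/-- `(S₁, S₂)` are snug shores for `v` (with respect to the root `r`):
two `k`-cuts avoiding `r` with `v ∉ S₁` and `S₂ = S₁ ∪ {v}`. -/
def SnugShores (G : SimpleGraph V) [DecidableRel G.Adj] (k : ℕ) (r v : V)
    (S₁ S₂ : Finset V) : Prop :=
  IsCut G k S₁ ∧ IsCut G k S₂ ∧ r ∉ S₁ ∧ r ∉ S₂ ∧ v ∉ S₁ ∧ S₂ = insert v S₁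

/-- `v` is a snug vertex (with respect to the root `r`). -/
def Snug (G : SimpleGraph V) [DecidableRel G.Adj] (k : ℕ) (r v : V) : Prop :=
  v ≠ r ∧ k + 1 ≤ G.degree v ∧ ∃ S₁ S₂ : Finset V, SnugShores G k r v S₁ S₂

/-- A snug chain: snug vertices `u 0, …, u t` together with `k`-cuts
`S 0, …, S (t+1)` such that `(S i, S (i+1))` are snug shores for `u i`. -/
def IsSnugChain (G : SimpleGraph V) [DecidableRel G.Adj] (k : ℕ) (r : V)
    (t : ℕ) (u : ℕ → V) (S : ℕ → Finset V) : Prop :=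
  ∀ i ≤ t, Snug G k r (u i) ∧ SnugShores G k r (u i) (S i) (S (i + 1))

/-- `L` is a maximal edge-covering laminar family of `k`-cuts avoiding `r`. -/
def MaxLaminarFamily (G : SimpleGraph V) [DecidableRel G.Adj] (k : ℕ) (r : V)
    (L : Finset (Finset V)) : Prop :=
  (∀ A ∈ L, IsCut G k A ∧ r ∉ A) ∧
  (∀ A ∈ L, ∀ B ∈ L, A ⊆ B ∨ B ⊆ A ∨ A ∩ B = ∅) ∧
  (∀ e ∈ G.edgeSet, ∃ A ∈ L, Crosses A e) ∧
  (∀ T : Finset V, IsCut G k T → r ∉ T →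
    (∀ A ∈ L, T ⊆ A ∨ A ⊆ T ∨ T ∩ A = ∅) → T ∈ L)

/-!
By maximality it suffices that no `k`-cut `A` avoiding `r` crosses `S₁` or `S₂`. Since `r` lies
outside every set in sight, `k`-edge-connectivity bounds the cut of each nonempty union or
difference from below by `k`, so submodularity (`δ(S ∩ T) + δ(S ∪ T) ≤ δ S + δ T`) and
posimodularity (`δ(S \ T) + δ(T \ S) ≤ δ S + δ T`) turn a crossing into sets `X`, `Y` with
`|δ X|, |δ Y| ≤ k`, `X \ Y = {u}` and `Y ⊄ X`, or directly into `S₂ ∩ A = {u}` with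
`|δ(S₂ ∩ A)| ≤ k`. Posimodularity of `X` and `Y` then gives `deg u + k ≤ 2k`, contradicting
`deg u ≥ k + 1`.
-/

theorem crosses_mk_iff {α : Type*} {S : Finset α} {x y : α} :
    Crosses S s(x, y) ↔ (x ∈ S ∧ y ∉ S) ∨ (y ∈ S ∧ x ∉ S) := by
  simp only [Crosses, Sym2.eq_iff]
  grind

section CutFunction

variable (G : SimpleGraph V) [DecidableRel G.Adj]

theorem cutEdges_singleton (u : V) : cutEdges G {u} = G.incidenceFinset u := by
  ext e
  induction e using Sym2.inductionOn with
  | hf x y =>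
    simp only [cutEdges, mem_filter, SimpleGraph.mem_incidenceFinset, SimpleGraph.incidenceSet,
      Set.mem_ofPred_eq, SimpleGraph.mem_edgeFinset, crosses_mk_iff, mem_singleton, Sym2.mem_iff]
    grind [SimpleGraph.mem_edgeSet, SimpleGraph.Adj.ne]

theorem card_cutEdges_singleton (u : V) : #(cutEdges G {u}) = G.degree u := by
  rw [cutEdges_singleton, SimpleGraph.card_incidenceFinset_eq_degree]

theorem card_cutEdges_inter_add_card_cutEdges_union_le (S T : Finset V) :
    #(cutEdges G (S ∩ T)) + #(cutEdges G (S ∪ T)) ≤ #(cutEdges G S) + #(cutEdges G T) := by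
  simp only [cutEdges, card_filter, ← sum_add_distrib]
  refine sum_le_sum fun e _ => ?_
  induction e using Sym2.inductionOn with
  | hf x y =>
    simp only [crosses_mk_iff, mem_inter, mem_union]
    by_cases x ∈ S <;> by_cases x ∈ T <;> by_cases y ∈ S <;> by_cases y ∈ T <;> simp [*]

theorem card_cutEdges_sdiff_add_card_cutEdges_sdiff_le (S T : Finset V) :
    #(cutEdges G (S \ T)) + #(cutEdges G (T \ S)) ≤ #(cutEdges G S) + #(cutEdges G T) := by
  simp only [cutEdges, card_filter, ← sum_add_distrib]
  refine sum_le_sum fun e _ => ?_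
  induction e using Sym2.inductionOn with
  | hf x y =>
    simp only [crosses_mk_iff, mem_sdiff]
    by_cases x ∈ S <;> by_cases x ∈ T <;> by_cases y ∈ S <;> by_cases y ∈ T <;> simp [*]

variable {G} {k : ℕ}

theorem EdgeConnected.le_card_cutEdges (hG : EdgeConnected G k) {S : Finset V} {r : V}
    (hne : S.Nonempty) (hr : r ∉ S) : k ≤ #(cutEdges G S) :=
  hG S hne fun h => hr (h ▸ mem_univ r)

theorem EdgeConnected.card_cutEdges_inter_add_le (hG : EdgeConnected G k) {S T : Finset V}
    {r : V} (hne : (S ∪ T).Nonempty) (hr : r ∉ S ∪ T) :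
    #(cutEdges G (S ∩ T)) + k ≤ #(cutEdges G S) + #(cutEdges G T) :=
  have := hG.le_card_cutEdges hne hr
  have := card_cutEdges_inter_add_card_cutEdges_union_le G S T
  by omega

theorem EdgeConnected.card_cutEdges_sdiff_add_le (hG : EdgeConnected G k) {S T : Finset V}
    {r : V} (hne : (T \ S).Nonempty) (hr : r ∉ T \ S) :
    #(cutEdges G (S \ T)) + k ≤ #(cutEdges G S) + #(cutEdges G T) :=
  have := hG.le_card_cutEdges hne hr
  have := card_cutEdges_sdiff_add_card_cutEdges_sdiff_le G S T
  by omega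

theorem EdgeConnected.lt_card_cutEdges_of_sdiff_eq_singleton (hG : EdgeConnected G k)
    {X Y : Finset V} {u : V} (hu : k < G.degree u) (hY : #(cutEdges G Y) ≤ k)
    (hXY : X \ Y = {u}) (hYX : (Y \ X).Nonempty) : k < #(cutEdges G X) := by
  have huX : u ∈ X := (mem_sdiff.1 (hXY ▸ mem_singleton_self u)).1
  have := hG.card_cutEdges_sdiff_add_le hYX (notMem_sdiff_of_mem_right huX)
  rw [hXY, card_cutEdges_singleton] at this
  omega

end CutFunction

section SnugShores

variable {G : SimpleGraph V} [DecidableRel G.Adj] {k : ℕ} {r u : V} {S₁ S₂ A : Finset V}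

theorem SnugShores.left_laminar (hG : EdgeConnected G k) (hu : k < G.degree u)
    (hs : SnugShores G k r u S₁ S₂) (hA : #(cutEdges G A) = k) (hrA : r ∉ A) :
    S₁ ⊆ A ∨ A ⊆ S₁ ∨ S₁ ∩ A = ∅ := by
  obtain ⟨⟨-, -, hS₁⟩, ⟨-, -, hS₂⟩, -, hrS₂, huS₁, rfl⟩ := hs
  by_contra! ⟨hS₁A, hAS₁, hS₁A_inter⟩
  rw [← sdiff_nonempty] at hS₁A hAS₁
  by_cases huA : u ∈ A
  · have hX : #(cutEdges G (insert u S₁ ∩ A)) ≤ k := by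
      have := hG.card_cutEdges_inter_add_le (T := A) (r := r)
        (insert_nonempty u S₁).inl (notMem_union.2 ⟨hrS₂, hrA⟩)
      omega
    have hXS₁ : (insert u S₁ ∩ A) \ S₁ = {u} := by grind
    have hS₁X : (S₁ \ (insert u S₁ ∩ A)).Nonempty := by grind
    exact hX.not_gt (hG.lt_card_cutEdges_of_sdiff_eq_singleton hu hS₁.le hXS₁ hS₁X)
  · have hX : #(cutEdges G (insert u S₁ \ A)) ≤ k := by
      have hAS₂ : (A \ insert u S₁).Nonempty := by grind
      have := hG.card_cutEdges_sdiff_add_le (r := r) hAS₂ (notMem_sdiff_of_notMem_left hrA)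
      omega
    have hXS₁ : (insert u S₁ \ A) \ S₁ = {u} := by grind
    have hS₁X : (S₁ \ (insert u S₁ \ A)).Nonempty := by grind
    exact hX.not_gt (hG.lt_card_cutEdges_of_sdiff_eq_singleton hu hS₁.le hXS₁ hS₁X)

theorem SnugShores.right_laminar (hG : EdgeConnected G k) (hu : k < G.degree u)
    (hs : SnugShores G k r u S₁ S₂) (hA : #(cutEdges G A) = k) (hrA : r ∉ A) :
    S₂ ⊆ A ∨ A ⊆ S₂ ∨ S₂ ∩ A = ∅ := by
  have hS₁_laminar := hs.left_laminar hG hu hA hrA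
  obtain ⟨-, ⟨-, -, hS₂⟩, -, hrS₂, huS₁, rfl⟩ := hs
  by_contra! ⟨hS₂A, hAS₂, hS₂A_inter⟩
  rcases hS₁_laminar with hS₁A | hAS₁ | hS₁A_disj
  · have huA : u ∉ A := fun huA => hS₂A (insert_subset huA hS₁A)
    have hS₂A_diff : insert u S₁ \ A = {u} := by grind
    exact hS₂.not_gt
      (hG.lt_card_cutEdges_of_sdiff_eq_singleton hu hA.le hS₂A_diff (sdiff_nonempty.2 hAS₂))
  · exact hAS₂ (hAS₁.trans (subset_insert u S₁))
  · have hsingle : insert u S₁ ∩ A = {u} := by grind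
    have := hG.card_cutEdges_inter_add_le (T := A) (r := r)
      (insert_nonempty u S₁).inl (notMem_union.2 ⟨hrS₂, hrA⟩)
    rw [hsingle, card_cutEdges_singleton] at this
    omega

end SnugShores

theorem snugShores_mem_maxLaminar_general
    (k : ℕ) (G : SimpleGraph V) [DecidableRel G.Adj]
    (hG : EdgeConnected G k) (r : V)
    (L : Finset (Finset V)) (hL : MaxLaminarFamily G k r L)
    (u : V) (hu : Snug G k r u)
    (S₁ S₂ : Finset V) (hs : SnugShores G k r u S₁ S₂) :
    S₁ ∈ L ∧ S₂ ∈ L := by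
  obtain ⟨hL_cuts, -, -, hL_max⟩ := hL
  have hdeg : k < G.degree u := hu.2.1
  refine ⟨hL_max S₁ hs.1 hs.2.2.1 fun A hA => ?_, hL_max S₂ hs.2.1 hs.2.2.2.1 fun A hA => ?_⟩
  · exact hs.left_laminar hG hdeg (hL_cuts A hA).1.2.2 (hL_cuts A hA).2
  · exact hs.right_laminar hG hdeg (hL_cuts A hA).1.2.2 (hL_cuts A hA).2

/-- Snug shores belong to every maximal edge-covering laminar family of
`k`-cuts avoiding the root. -/
theorem snugShores_mem_maxLaminar
    (k : ℕ) (hk : 1 ≤ k) (G : SimpleGraph V) [DecidableRel G.Adj]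
    (hG : EdgeConnected G k) (r : V)
    (L : Finset (Finset V)) (hL : MaxLaminarFamily G k r L)
    (u : V) (hu : Snug G k r u)
    (S₁ S₂ : Finset V) (hs : SnugShores G k r u S₁ S₂) :
    S₁ ∈ L ∧ S₂ ∈ L :=
  snugShores_mem_maxLaminar_general k G hG r L hL u hu S₁ S₂ hs
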